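/- arXiv:1902.00612 — 4 statements merged into one kernel-verified Lean document; each statement's English description precedes it below -/
import Mathlib

section
/- For every k ≥ 3 and n ≥ 5, every edge coloring of the complete graph K_n using at most k colors contains either a rainbow path P_4 on 4 vertices or a monochromatic path P_3 on 3 vertices; moreover there exists a 3-coloring of K_4 (each color class a perfect matching) with no rainbow P_4 and no monochromatic P_3. Hence gr_k(P_4 : P_3) = 5 for all k ≥ 3. -/
open SimpleGraph

/-- A rainbow path on `ℓ` vertices in an edge coloring `c` of the complete graph on `Fin n`:
an injective sequence of `ℓ` vertices whose `ℓ - 1` consecutive edges get pairwise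
distinct colors. -/
def hasRainbowPath (ℓ : ℕ) {n : ℕ} {α : Type*} (c : Sym2 (Fin n) → α) : Prop :=
  ∃ f : Fin ℓ ↪ Fin n, Function.Injective (fun i : Fin (ℓ - 1) =>
    c s(f ⟨i.1, by have := i.2; omega⟩, f ⟨i.1 + 1, by have := i.2; omega⟩))

/-- A copy of the graph `H` all of whose edges receive the color `i`. -/
def hasCopyInColor {V : Type*} (H : SimpleGraph V) {n : ℕ} {α : Type*}
    (c : Sym2 (Fin n) → α) (i : α) : Prop :=
  ∃ f : V ↪ Fin n, ∀ u v, H.Adj u v → c s(f u, f v) = i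

/-- A monochromatic copy of the graph `H`. -/
def hasMonoCopy {V : Type*} (H : SimpleGraph V) {n : ℕ} {α : Type*}
    (c : Sym2 (Fin n) → α) : Prop :=
  ∃ i, hasCopyInColor H c i

/-- The graph formed by the edges of color `i`. -/
def colorGraph {n : ℕ} {α : Type*} (c : Sym2 (Fin n) → α) (i : α) : SimpleGraph (Fin n) :=
  SimpleGraph.fromEdgeSet {e | c e = i ∧ ¬ e.IsDiag}

/-- A copy, in color `i`, of some connected graph containing `H` as a subgraph:
equivalently, a copy of `H` in color `i` whose vertices all lie in a single
connected component of the graph of color-`i` edges. -/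
def hasConnCopyInColor {V : Type*} (H : SimpleGraph V) {n : ℕ} {α : Type*}
    (c : Sym2 (Fin n) → α) (i : α) : Prop :=
  ∃ f : V ↪ Fin n, (∀ u v, H.Adj u v → c s(f u, f v) = i) ∧
    ∀ u v, (colorGraph c i).Reachable (f u) (f v)

/-- A monochromatic copy of some connected graph containing `H` as a subgraph. -/
def hasMonoConnCopy {V : Type*} (H : SimpleGraph V) {n : ℕ} {α : Type*}
    (c : Sym2 (Fin n) → α) : Prop :=
  ∃ i, hasConnCopyInColor H c i

/-- The `k`-color Ramsey number `R_k(H)`. -/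
noncomputable def ramsey {V : Type*} (H : SimpleGraph V) (k : ℕ) : ℕ :=
  sInf {n | ∀ c : Sym2 (Fin n) → Fin k, hasMonoCopy H c}

/-- The asymmetric two-color Ramsey number `R(F, G)`. -/
noncomputable def ramseyPair {V W : Type*} (F : SimpleGraph V) (G : SimpleGraph W) : ℕ :=
  sInf {n | ∀ c : Sym2 (Fin n) → Fin 2, hasCopyInColor F c 0 ∨ hasCopyInColor G c 1}

/-- `R_2(𝒞(H))`, the two-color Ramsey number of the family of connected graphs
containing `H` as a subgraph. -/
noncomputable def ramseyConn {V : Type*} (H : SimpleGraph V) : ℕ :=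
  sInf {n | ∀ c : Sym2 (Fin n) → Fin 2, hasMonoConnCopy H c}

/-- `R(𝒞(F), G)`, the asymmetric Ramsey number: red member of the family of
connected graphs containing `F`, versus blue copy of `G`. -/
noncomputable def ramseyConnPair {V W : Type*} (F : SimpleGraph V) (G : SimpleGraph W) : ℕ :=
  sInf {n | ∀ c : Sym2 (Fin n) → Fin 2, hasConnCopyInColor F c 0 ∨ hasCopyInColor G c 1}

/-- The Gallai-Ramsey number `gr_k(P_ℓ : H)`: least `n` such that every `k`-coloring of
the edges of `K_n` contains a rainbow path on `ℓ` vertices or a monochromatic copy of `H`. -/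
noncomputable def gallaiRamsey (ℓ : ℕ) {V : Type*} (H : SimpleGraph V) (k : ℕ) : ℕ :=
  sInf {n | ∀ c : Sym2 (Fin n) → Fin k, hasRainbowPath ℓ c ∨ hasMonoCopy H c}

/-- `m` vertex-disjoint copies of `H`. -/
def nCopies (m : ℕ) {V : Type*} (H : SimpleGraph V) : SimpleGraph (Fin m × V) where
  Adj a b := a.1 = b.1 ∧ H.Adj a.2 b.2
  symm := ⟨by rintro a b ⟨h1, h2⟩; exact ⟨h1.symm, h2.symm⟩⟩
  loopless := ⟨by rintro a ⟨-, h⟩; exact H.irrefl h⟩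

/-- `s(G)` with respect to `r` colors: the minimum size of a color class over all
proper vertex colorings of `G` with `r` colors. -/
noncomputable def minClass {V : Type*} (G : SimpleGraph V) (r : ℕ) : ℕ :=
  sInf {n | ∃ (C : G.Coloring (Fin r)) (i : Fin r), n = Nat.card {v : V | C v = i}}

/-!
Without a monochromatic `P₃`, adjacent edges get distinct colours; without a rainbow `P₄` it then
follows, looking at the path `a - b - d - e`, that any two disjoint edges `ab`, `de` get the same
colour. On five vertices the edges `23` and `24` are both disjoint from `01`, so they share a
colour although they are adjacent. On four vertices, colouring the three perfect matchings of
`K₄` differently avoids both configurations, and this colouring restricts to smaller complete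
graphs.
-/

section PathColorings

variable {n : ℕ} {α : Type*}

lemma hasMonoCopy_pathGraph_three_iff (c : Sym2 (Fin n) → α) :
    hasMonoCopy (pathGraph 3) c ↔
      ∃ x y z, x ≠ y ∧ y ≠ z ∧ x ≠ z ∧ c s(x, y) = c s(y, z) := by
  constructor
  · rintro ⟨i, f, hf⟩
    refine ⟨f 0, f 1, f 2, f.injective.ne (by decide), f.injective.ne (by decide),
      f.injective.ne (by decide), ?_⟩
    rw [hf 0 1 (by simp [pathGraph_adj]), hf 1 2 (by simp [pathGraph_adj])]
  · rintro ⟨x, y, z, hxy, hyz, hxz, h⟩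
    refine ⟨c s(x, y), ⟨![x, y, z], ?_⟩, ?_⟩
    · intro a b hab
      fin_cases a <;> fin_cases b <;> simp_all
    · intro u v huv
      rw [pathGraph_adj] at huv
      change c s(![x, y, z] u, ![x, y, z] v) = c s(x, y)
      fin_cases u <;> fin_cases v <;> simp at huv ⊢ <;> simp only [Sym2.eq_swap, h]

lemma hasRainbowPath_four_iff (c : Sym2 (Fin n) → α) :
    hasRainbowPath 4 c ↔
      ∃ u v w x, u ≠ v ∧ u ≠ w ∧ u ≠ x ∧ v ≠ w ∧ v ≠ x ∧ w ≠ x ∧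
        c s(u, v) ≠ c s(v, w) ∧ c s(v, w) ≠ c s(w, x) ∧ c s(u, v) ≠ c s(w, x) := by
  constructor
  · rintro ⟨f, hf⟩
    exact ⟨f 0, f 1, f 2, f 3, f.injective.ne (by decide), f.injective.ne (by decide),
      f.injective.ne (by decide), f.injective.ne (by decide), f.injective.ne (by decide),
      f.injective.ne (by decide), hf.ne (by decide : (0 : Fin 3) ≠ 1),
      hf.ne (by decide : (1 : Fin 3) ≠ 2), hf.ne (by decide : (0 : Fin 3) ≠ 2)⟩
  · rintro ⟨u, v, w, x, huv, huw, hux, hvw, hvx, hwx, h01, h12, h02⟩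
    refine ⟨⟨![u, v, w, x], ?_⟩, ?_⟩
    · intro a b hab
      fin_cases a <;> fin_cases b <;> simp_all
    · intro a b hab
      fin_cases a <;> fin_cases b
      all_goals first | rfl | exact absurd hab ‹_› | exact absurd hab.symm ‹_›

theorem hasRainbowPath_four_or_hasMonoCopy_pathGraph_three (hn : 5 ≤ n)
    (c : Sym2 (Fin n) → α) : hasRainbowPath 4 c ∨ hasMonoCopy (pathGraph 3) c := by
  rw [or_iff_not_imp_right, hasMonoCopy_pathGraph_three_iff, hasRainbowPath_four_iff]
  intro hmono
  push Not at hmono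
  by_contra! hrainbow
  have disjoint_eq : ∀ a b d e, a ≠ b → a ≠ d → a ≠ e → b ≠ d → b ≠ e → d ≠ e →
      c s(a, b) = c s(d, e) := fun a b d e hab had hae hbd hbe hde =>
    hrainbow a b d e hab had hae hbd hbe hde (hmono a b d hab hbd had) (hmono b d e hbd hde hbe)
  set v : Fin 5 → Fin n := Fin.castLE hn
  have hv : ∀ i j : Fin 5, i ≠ j → v i ≠ v j := fun i j => (Fin.castLE_injective hn).ne
  have h23 : c s(v 0, v 1) = c s(v 2, v 3) := disjoint_eq _ _ _ _
    (hv 0 1 (by decide)) (hv 0 2 (by decide)) (hv 0 3 (by decide))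
    (hv 1 2 (by decide)) (hv 1 3 (by decide)) (hv 2 3 (by decide))
  have h24 : c s(v 0, v 1) = c s(v 2, v 4) := disjoint_eq _ _ _ _
    (hv 0 1 (by decide)) (hv 0 2 (by decide)) (hv 0 4 (by decide))
    (hv 1 2 (by decide)) (hv 1 4 (by decide)) (hv 2 4 (by decide))
  refine hmono (v 3) (v 2) (v 4) (hv 3 2 (by decide)) (hv 2 4 (by decide)) (hv 3 4 (by decide)) ?_
  rw [Sym2.eq_swap, ← h23, h24]

end PathColorings

section Restriction

variable {m n : ℕ} {α β : Type*} {c : Sym2 (Fin n) → α} {γ : α → β} {e : Fin m ↪ Fin n}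

lemma hasRainbowPath.of_comp_map {ℓ : ℕ} (h : hasRainbowPath ℓ (γ ∘ c ∘ Sym2.map e)) :
    hasRainbowPath ℓ c := by
  obtain ⟨f, hf⟩ := h
  exact ⟨f.trans e, fun a b hab => hf (by simpa using congrArg γ hab)⟩

lemma hasMonoCopy.of_comp_map [Nonempty α] {V : Type*} {H : SimpleGraph V}
    (hγ : Function.Injective γ) (h : hasMonoCopy H (γ ∘ c ∘ Sym2.map e)) : hasMonoCopy H c := by
  obtain ⟨j, f, hf⟩ := h
  by_cases hj : ∃ i, γ i = j
  · obtain ⟨i, rfl⟩ := hj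
    exact ⟨i, f.trans e, fun u v huv => hγ (by simpa using hf u v huv)⟩
  -- otherwise `H` has no edges, and any colour will do
  · exact ⟨Classical.arbitrary α, f.trans e, fun u v huv => (hj ⟨_, hf u v huv⟩).elim⟩

end Restriction

/-- The colour of `s(u, v)` is determined by `u ^^^ v ∈ {1, 2, 3}`, so each colour class is one
of the three perfect matchings `{u, u ^^^ t}` of `K₄`. -/
def matchingColoring : Sym2 (Fin 4) → Fin 3 :=
  Sym2.lift ⟨fun u v => Fin.ofNat 3 (u.val ^^^ v.val), fun u v => by simp only [Nat.xor_comm]⟩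

lemma matchingColoring_existsUnique (i : Fin 3) (v : Fin 4) :
    ∃! u, u ≠ v ∧ matchingColoring s(v, u) = i := by
  revert i v
  unfold ExistsUnique
  decide

lemma not_hasRainbowPath_matchingColoring : ¬ hasRainbowPath 4 matchingColoring := by
  rw [hasRainbowPath_four_iff]
  decide

lemma not_hasMonoCopy_matchingColoring : ¬ hasMonoCopy (pathGraph 3) matchingColoring := by
  rw [hasMonoCopy_pathGraph_three_iff]
  decide

lemma exists_not_hasRainbowPath_not_hasMonoCopy_of_le_four {k m : ℕ} (hk : 3 ≤ k) (hm : m ≤ 4) :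
    ∃ c : Sym2 (Fin m) → Fin k, ¬ hasRainbowPath 4 c ∧ ¬ hasMonoCopy (pathGraph 3) c :=
  ⟨Fin.castLE hk ∘ matchingColoring ∘ Sym2.map (Fin.castLEEmb hm),
    fun h => not_hasRainbowPath_matchingColoring h.of_comp_map,
    fun h => not_hasMonoCopy_matchingColoring (h.of_comp_map (Fin.castLE_injective hk))⟩

lemma gallaiRamsey_eq {ℓ k N : ℕ} {V : Type*} {H : SimpleGraph V}
    (hN : ∀ c : Sym2 (Fin N) → Fin k, hasRainbowPath ℓ c ∨ hasMonoCopy H c)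
    (hlt : ∀ m < N, ∃ c : Sym2 (Fin m) → Fin k, ¬ hasRainbowPath ℓ c ∧ ¬ hasMonoCopy H c) :
    gallaiRamsey ℓ H k = N := by
  refine le_antisymm (Nat.sInf_le hN) (le_csInf ⟨N, hN⟩ fun m hm => not_lt.1 fun hmN => ?_)
  obtain ⟨c, hrainbow, hmono⟩ := hlt m hmN
  exact (hm c).elim hrainbow hmono

/-- For `k ≥ 3` and `n ≥ 5`, every `k`-coloring of `K_n` contains a rainbow `P₄` or a
monochromatic `P₃`; there is a 3-coloring of `K₄`, each color class a perfect matching,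
with no rainbow `P₄` and no monochromatic `P₃`; hence `gr_k(P₄ : P₃) = 5`. -/
theorem stmt0 (k : ℕ) (hk : 3 ≤ k) :
    (∀ n, 5 ≤ n → ∀ c : Sym2 (Fin n) → Fin k,
      hasRainbowPath 4 c ∨ hasMonoCopy (SimpleGraph.pathGraph 3) c) ∧
    (∃ c : Sym2 (Fin 4) → Fin 3,
      (∀ i : Fin 3, ∀ v : Fin 4, ∃! u, u ≠ v ∧ c s(v, u) = i) ∧
      ¬ hasRainbowPath 4 c ∧ ¬ hasMonoCopy (SimpleGraph.pathGraph 3) c) ∧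
    gallaiRamsey 4 (SimpleGraph.pathGraph 3) k = 5 :=
  ⟨fun _ hn c => hasRainbowPath_four_or_hasMonoCopy_pathGraph_three hn c,
    ⟨matchingColoring, matchingColoring_existsUnique, not_hasRainbowPath_matchingColoring,
      not_hasMonoCopy_matchingColoring⟩,
    gallaiRamsey_eq (hasRainbowPath_four_or_hasMonoCopy_pathGraph_three le_rfl) fun _ hm =>
      exists_not_hasRainbowPath_not_hasMonoCopy_of_le_four hk (by omega)⟩
end

section
/- Every edge coloring of K_n (n ≥ 4) containing no rainbow path on 4 vertices either uses at most two colors, or has n = 4 and is the 3-coloring of K_4 in which each color class is a perfect matching. -/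
open SimpleGraph

/-! A path `p q r s` with `c s(q, r) ≠ c s(r, s)` forces `c s(p, q)` to be one of these two
colors. If some triangle carries exactly two colors `a ≠ b`, propagating this along paths
through the triangle shows that every edge is colored `a` or `b`. Otherwise every triangle is
monochromatic or rainbow; a monochromatic triangle spreads its color to all edges, so the
coloring is either constant or proper. In a proper coloring every path `p q r s` has
`c s(p, q) ≠ c s(q, r) ≠ c s(r, s)`, hence any two disjoint edges share a color. On five
vertices this yields two adjacent edges of equal color, so `n = 4`, and on `K₄` each color
class is then a perfect matching. -/

section EdgeColoring

variable {V α : Type*} {c : Sym2 V → α}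

def RainbowP4Free (c : Sym2 V → α) : Prop :=
  ∀ ⦃p q r s : V⦄, [p, q, r, s].Nodup →
    c s(p, q) = c s(q, r) ∨ c s(q, r) = c s(r, s) ∨ c s(p, q) = c s(r, s)

def IsProperEdgeColoring (c : Sym2 V → α) : Prop :=
  ∀ ⦃p q r : V⦄, q ≠ p → r ≠ p → q ≠ r → c s(p, q) ≠ c s(p, r)

theorem rainbowP4Free_of_not_hasRainbowPath {n : ℕ} {c : Sym2 (Fin n) → α}
    (h : ¬ hasRainbowPath 4 c) : RainbowP4Free c := by
  intro p q r s hd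
  by_contra! hne
  obtain ⟨hpq, hqr, hps⟩ := hne
  refine h ⟨⟨![p, q, r, s], by rwa [← List.nodup_ofFn]⟩, fun i j hij => ?_⟩
  fin_cases i <;> fin_cases j <;> simp_all [eq_comm]

theorem RainbowP4Free.eq_or_eq_of_ne (hc : RainbowP4Free c) (p q r s : V)
    (hd : [p, q, r, s].Nodup) (h : c s(q, r) ≠ c s(r, s)) :
    c s(p, q) = c s(q, r) ∨ c s(p, q) = c s(r, s) := by
  have := hc hd
  tauto

section Triangle

variable {u v w : V} {a b : α}

theorem RainbowP4Free.color_eq_or_eq_of_ne_base_vertex (hc : RainbowP4Free c)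
    (hvu : v ≠ u) (hwu : w ≠ u) (hvw : v ≠ w) (hv : c s(u, v) = a) (hw : c s(u, w) = a)
    (hb : c s(v, w) = b) (hab : a ≠ b) (t : V) (htv : t ≠ v) :
    c s(t, v) = a ∨ c s(t, v) = b := by
  by_cases htu : t = u; · exact htu ▸ Or.inl hv
  by_cases htw : t = w; · exact htw ▸ Or.inr (by rw [Sym2.eq_swap, hb])
  have hw' : c s(w, u) = a := by rw [Sym2.eq_swap, hw]
  simpa [hb, hw', or_comm] using
    hc.eq_or_eq_of_ne t v w u (by grind) (by rw [hb, hw']; exact hab.symm)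

theorem RainbowP4Free.color_eq_or_eq_of_triangle (hc : RainbowP4Free c)
    (hvu : v ≠ u) (hwu : w ≠ u) (hvw : v ≠ w) (hv : c s(u, v) = a) (hw : c s(u, w) = a)
    (hb : c s(v, w) = b) (hab : a ≠ b) :
    ∀ e : Sym2 V, ¬ e.IsDiag → c e = a ∨ c e = b := by
  have to_v := hc.color_eq_or_eq_of_ne_base_vertex hvu hwu hvw hv hw hb hab
  have to_w := hc.color_eq_or_eq_of_ne_base_vertex hwu hvu hvw.symm hw hv
    (by rw [Sym2.eq_swap, hb]) hab
  have to_u : ∀ t, t ≠ u → c s(t, u) = a ∨ c s(t, u) = b := by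
    intro t htu
    by_cases htv : t = v; · exact htv ▸ Or.inl (by rw [Sym2.eq_swap, hv])
    by_cases htw : t = w; · exact htw ▸ Or.inl (by rw [Sym2.eq_swap, hw])
    simpa [hv, hb] using hc.eq_or_eq_of_ne t u v w (by grind) (by rw [hv, hb]; exact hab)
  refine Sym2.ind fun p q hpq => ?_
  rw [Sym2.mk_isDiag_iff] at hpq
  by_cases hq : q = u ∨ q = v ∨ q = w
  · rcases hq with rfl | rfl | rfl
    exacts [to_u p hpq, to_v p hpq, to_w p hpq]
  by_cases hp : p = u ∨ p = v ∨ p = w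
  · rw [Sym2.eq_swap]
    rcases hp with rfl | rfl | rfl
    exacts [to_u q (Ne.symm hpq), to_v q (Ne.symm hpq), to_w q (Ne.symm hpq)]
  -- `c s(v, u) ≠ c s(v, w)`, so `c s(q, v)` differs from one of them.
  by_cases h : c s(q, v) = c s(v, u)
  · have := hc.eq_or_eq_of_ne p q v w (by grind)
      (by rw [h, Sym2.eq_swap, hv, hb]; exact hab)
    grind
  · have := hc.eq_or_eq_of_ne p q v u (by grind) h
    grind

end Triangle

theorem RainbowP4Free.isProperEdgeColoring_or_const (hc : RainbowP4Free c)
    (htri : ∀ ⦃u v w : V⦄, v ≠ u → w ≠ u → v ≠ w → c s(u, v) = c s(u, w) →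
      c s(v, w) = c s(u, v)) :
    IsProperEdgeColoring c ∨ ∃ a, ∀ e : Sym2 V, ¬ e.IsDiag → c e = a := by
  rw [or_iff_not_imp_left]
  intro hp
  simp only [IsProperEdgeColoring, not_forall, not_not] at hp
  obtain ⟨x, y, z, hyx, hzx, hyz, hxyz⟩ := hp
  have from_x : ∀ t, t ≠ x → c s(x, t) = c s(x, y) := by
    intro t htx
    by_cases hty : t = y; · rw [hty]
    by_cases htz : t = z; · rw [htz, ← hxyz]
    -- each way the path `z x t y` can repeat a color forces `c s(x, t) = c s(x, y)`
    rcases hc (p := z) (q := x) (r := t) (s := y) (by grind) with h | h | h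
    · grind
    · have := htri (u := t) (v := x) (w := y) (by grind) (by grind) hyx.symm (by grind)
      grind
    · have := htri (u := y) (v := x) (w := t) hyx.symm (by grind) (by grind) (by grind)
      grind
  refine ⟨c s(x, y), Sym2.ind fun p q hpq => ?_⟩
  rw [Sym2.mk_isDiag_iff] at hpq
  by_cases hpx : p = x; · exact hpx ▸ from_x q (by grind)
  by_cases hqx : q = x; · rw [Sym2.eq_swap]; exact hqx ▸ from_x p (by grind)
  rw [htri hpx hqx hpq ((from_x p hpx).trans (from_x q hqx).symm), from_x p hpx]

namespace IsProperEdgeColoring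

theorem color_eq_of_disjoint (hp : IsProperEdgeColoring c) (hc : RainbowP4Free c)
    (p q r s : V) (hd : [p, q, r, s].Nodup) : c s(p, q) = c s(r, s) := by
  rcases hc hd with h | h | h
  · exact (hp (p := q) (q := p) (r := r) (by grind) (by grind) (by grind)
      (by rwa [Sym2.eq_swap])).elim
  · exact (hp (p := r) (q := q) (r := s) (by grind) (by grind) (by grind)
      (by rwa [Sym2.eq_swap (a := r)])).elim
  · exact h

theorem card_le_four [Fintype V] (hp : IsProperEdgeColoring c) (hc : RainbowP4Free c) :
    Fintype.card V ≤ 4 := by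
  by_contra! h5
  obtain ⟨f⟩ := Function.Embedding.nonempty_of_card_le (α := Fin 5) (β := V)
    (by simpa using h5.nat_succ_le)
  have h1 := hp.color_eq_of_disjoint hc (f 0) (f 1) (f 2) (f 3) (by simp [f.injective.eq_iff])
  have h2 := hp.color_eq_of_disjoint hc (f 2) (f 3) (f 0) (f 4) (by simp [f.injective.eq_iff])
  exact hp (by simp [f.injective.eq_iff]) (by simp [f.injective.eq_iff])
    (by simp [f.injective.eq_iff]) (h1.trans h2)

theorem existsUnique_color_eq [Fintype V] (hp : IsProperEdgeColoring c)
    (hc : RainbowP4Free c) (hV : 4 ≤ Fintype.card V) :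
    ∀ e : Sym2 V, ¬ e.IsDiag → ∀ v : V, ∃! u, u ≠ v ∧ c s(v, u) = c e := by
  classical
  refine Sym2.ind fun p q hpq t => ?_
  rw [Sym2.mk_isDiag_iff] at hpq
  obtain ⟨u, hut, hu⟩ : ∃ u, u ≠ t ∧ c s(t, u) = c s(p, q) := by
    by_cases htp : t = p; · exact ⟨q, by grind, by rw [htp]⟩
    by_cases htq : t = q; · exact ⟨p, by grind, by rw [htq, Sym2.eq_swap]⟩
    obtain ⟨r, -, hr⟩ := Finset.exists_mem_notMem_of_card_lt_card (s := {p, q, t})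
      (t := Finset.univ) (by grw [Finset.card_le_three, Finset.card_univ]; omega)
    simp only [Finset.mem_insert, Finset.mem_singleton, not_or] at hr
    exact ⟨r, by grind, hp.color_eq_of_disjoint hc t r p q (by grind)⟩
  refine ⟨u, ⟨hut, hu⟩, fun y ⟨hyt, hy⟩ => ?_⟩
  by_contra hyu
  exact hp hyt hut hyu (hy.trans hu.symm)

end IsProperEdgeColoring

end EdgeColoring

/-- Every edge coloring of `K_n` (`n ≥ 4`) with no rainbow `P₄` uses at most two colors,
or `n = 4` and every color class is a perfect matching of `K₄`. -/
theorem stmt2 {n : ℕ} (hn : 4 ≤ n) {α : Type*} (c : Sym2 (Fin n) → α)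
    (h : ¬ hasRainbowPath 4 c) :
    (∃ i j : α, ∀ e : Sym2 (Fin n), ¬ e.IsDiag → c e = i ∨ c e = j) ∨
    (n = 4 ∧ ∀ e : Sym2 (Fin n), ¬ e.IsDiag →
      ∀ v : Fin n, ∃! u, u ≠ v ∧ c s(v, u) = c e) := by
  have hc := rainbowP4Free_of_not_hasRainbowPath h
  by_cases htri : ∃ u v w : Fin n, v ≠ u ∧ w ≠ u ∧ v ≠ w ∧ c s(u, v) = c s(u, w) ∧
      c s(v, w) ≠ c s(u, v)
  · obtain ⟨u, v, w, hvu, hwu, hvw, huv_eq, hne⟩ := htri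
    exact Or.inl ⟨_, _, hc.color_eq_or_eq_of_triangle hvu hwu hvw rfl huv_eq.symm rfl hne.symm⟩
  push Not at htri
  rcases hc.isProperEdgeColoring_or_const htri with hp | ⟨a, ha⟩
  · have hn4 : n = 4 := le_antisymm (by simpa using hp.card_le_four hc) hn
    exact Or.inr ⟨hn4, hp.existsUnique_color_eq hc (by simpa using hn)⟩
  · exact Or.inl ⟨a, a, fun e he => Or.inl (ha e he)⟩
end

section
/- For m ≥ n ≥ 1, R(C(mC_5), nK_2) = 5m + n − 1: every red/blue coloring of K_{5m+n-1} contains a red connected subgraph containing m disjoint 5-cycles or a blue matching of size n, and this fails for K_{5m+n-2}. -/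
open SimpleGraph

/-!
Upper bound: if there is no blue `nK₂`, take a maximum blue matching, of size `ν < n`. The
unmatched vertices `S` span a red clique, and since there is no augmenting path of length three,
each matching edge has an endpoint (a hub) joined in red to all of `S` except at most one vertex.
Each hub together with four vertices of `S` (its two cycle neighbours avoiding the exceptional
vertex) closes a red `C₅`, and the other `m - ν` cycles lie inside `S`; this fits because
`|S| = 5m + n - 1 - 2ν ≥ 5m - ν`. Every hub has a red neighbour in `S`, so all cycles lie in
one red component.

Lower bound: on `5m + n - 2` vertices colour blue exactly the edges meeting a fixed set `A` of
`n - 1` vertices. Every blue edge meets `A`, so there is no blue `nK₂`, and the red edges live on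
the remaining `5m - 1` vertices, too few for `mC₅`.
-/

namespace SimpleGraph

variable {V U : Type*}

section Copies

variable {G : SimpleGraph V} {H : SimpleGraph U} {k : ℕ}

theorem Copy.exists_nCopies_succ (g : H.Copy G) (f : (nCopies k H).Copy G)
    (hgf : Disjoint (Set.range g) (Set.range f)) :
    ∃ f' : (nCopies (k + 1) H).Copy G, Set.range f' ⊆ Set.range g ∪ Set.range f := by
  let F : Fin (k + 1) × U → V := fun p => Fin.cases (g p.2) (fun i => f (i, p.2)) p.1
  have hF : Function.Injective F := by
    rintro ⟨i, a⟩ ⟨j, b⟩ h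
    cases i using Fin.cases <;> cases j using Fin.cases <;>
      simp only [F, Fin.cases_zero, Fin.cases_succ] at h
    · rw [g.injective h]
    · exact (Set.disjoint_left.1 hgf ⟨_, h⟩ ⟨_, rfl⟩).elim
    · exact (Set.disjoint_left.1 hgf ⟨_, h.symm⟩ ⟨_, rfl⟩).elim
    · simpa using f.injective h
  refine ⟨⟨⟨F, ?_⟩, hF⟩, ?_⟩
  · rintro ⟨i, a⟩ ⟨j, b⟩ ⟨rfl : i = j, hab⟩
    cases i using Fin.cases
    · exact g.toHom.map_adj hab
    · exact f.toHom.map_adj (show (nCopies k H).Adj (_, a) (_, b) from ⟨rfl, hab⟩)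
  · rintro _ ⟨⟨i, a⟩, rfl⟩
    cases i using Fin.cases
    · exact Or.inl ⟨a, rfl⟩
    · exact Or.inr ⟨_, rfl⟩

theorem Copy.exists_nCopies_update (f : (nCopies k H).Copy G) (i : Fin k)
    (g : H.Copy G) (hgf : Disjoint (Set.range g) (f '' {p | p.1 ≠ i})) :
    ∃ f' : (nCopies k H).Copy G,
      Set.range f' ⊆ Set.range g ∪ f '' {p | p.1 ≠ i} := by
  let F : Fin k × U → V := fun p => if p.1 = i then g p.2 else f p
  have hF : Function.Injective F := by
    rintro ⟨j, a⟩ ⟨l, b⟩ h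
    by_cases hj : j = i <;> by_cases hl : l = i <;> simp only [F, hj, hl, if_true, if_false] at h
    · subst hj hl; rw [g.injective h]
    · exact (Set.disjoint_left.1 hgf ⟨_, h⟩ ⟨_, hl, rfl⟩).elim
    · exact (Set.disjoint_left.1 hgf ⟨_, h.symm⟩ ⟨_, hj, rfl⟩).elim
    · exact f.injective h
  refine ⟨⟨⟨F, ?_⟩, hF⟩, ?_⟩
  · rintro ⟨j, a⟩ ⟨l, b⟩ ⟨rfl : j = l, hab⟩
    by_cases hj : j = i <;> simp only [F, hj, if_true, if_false]
    · exact g.toHom.map_adj hab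
    · exact f.toHom.map_adj (show (nCopies k H).Adj (j, a) (j, b) from ⟨rfl, hab⟩)
  · rintro _ ⟨⟨j, a⟩, rfl⟩
    change F (j, a) ∈ _
    by_cases hj : j = i <;> simp only [F, hj, if_true, if_false]
    · exact Or.inl ⟨a, rfl⟩
    · exact Or.inr ⟨_, hj, rfl⟩

theorem exists_pathGraph_two_copy {x y : V} (h : G.Adj x y) :
    ∃ g : (pathGraph 2).Copy G, Set.range g ⊆ {x, y} := by
  refine ⟨⟨⟨![x, y], ?_⟩, ?_⟩, ?_⟩
  · intro a b hab
    fin_cases a <;> fin_cases b <;> simp_all [pathGraph_adj, h.symm]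
  · simp [h.ne]
  · rintro _ ⟨a, rfl⟩
    fin_cases a <;> simp

theorem exists_cycleGraph_copy {n : ℕ} (v : Fin (n + 2) → V) (hv : Function.Injective v)
    (hadj : ∀ i, G.Adj (v i) (v (i + 1))) : ∃ g : (cycleGraph (n + 2)).Copy G, ⇑g = v := by
  refine ⟨⟨⟨v, ?_⟩, hv⟩, rfl⟩
  intro a b hab
  rcases cycleGraph_adj.1 hab with h | h
  · rw [sub_eq_iff_eq_add'] at h; subst h; exact (hadj b).symm
  · rw [sub_eq_iff_eq_add'] at h; subst h; exact hadj a

theorem exists_maximal_nCopies_isContained {n : ℕ} (hn : ¬ nCopies n H ⊑ G) :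
    ∃ k < n, nCopies k H ⊑ G ∧ ¬ nCopies (k + 1) H ⊑ G := by
  classical
  have hex : ∃ k, ¬ nCopies k H ⊑ G := ⟨n, hn⟩
  have hpos : Nat.find hex ≠ 0 := fun h => (h ▸ Nat.find_spec hex) IsContained.of_isEmpty
  refine ⟨Nat.find hex - 1, by have := Nat.find_min' hex hn; omega,
    not_not.1 (Nat.find_min hex (by omega)), ?_⟩
  rw [Nat.sub_add_cancel (Nat.pos_of_ne_zero hpos)]
  exact Nat.find_spec hex

end Copies

section MaximalMatching

variable {G : SimpleGraph V} {k : ℕ}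

theorem Copy.isClique_compl_range_compl (f : (nCopies k (pathGraph 2)).Copy G)
    (hmax : ¬ nCopies (k + 1) (pathGraph 2) ⊑ G) : Gᶜ.IsClique (Set.range f)ᶜ := by
  intro x hx y hy hxy
  refine ⟨hxy, fun hadj => hmax ?_⟩
  obtain ⟨g, hg⟩ := exists_pathGraph_two_copy hadj
  obtain ⟨f', -⟩ := g.exists_nCopies_succ f <| Set.disjoint_of_subset_left hg <| by
    simp_all [Set.disjoint_insert_left]
  exact ⟨f'⟩

theorem Copy.not_adj_of_not_isContained_succ (f : (nCopies k (pathGraph 2)).Copy G)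
    (hmax : ¬ nCopies (k + 1) (pathGraph 2) ⊑ G) (i : Fin k) {x y : V} (hx : x ∉ Set.range f)
    (hy : y ∉ Set.range f) (hxy : x ≠ y) (hax : G.Adj (f (i, 0)) x) :
    ¬ G.Adj (f (i, 1)) y := by
  intro hby
  have hf : Function.Injective f := f.injective
  obtain ⟨g₁, hg₁⟩ := exists_pathGraph_two_copy hax
  obtain ⟨g₂, hg₂⟩ := exists_pathGraph_two_copy hby
  obtain ⟨f₁, hf₁⟩ := f.exists_nCopies_update i g₁ <| Set.disjoint_of_subset_left hg₁ <| by
    simp_all [Set.disjoint_insert_left, hf.eq_iff, Prod.ext_iff]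
  obtain ⟨f₂, -⟩ := g₂.exists_nCopies_succ f₁ <|
    Set.disjoint_of_subset hg₂ (hf₁.trans (Set.union_subset_union_left _ hg₁)) <| by
      simp_all [Set.disjoint_insert_left, hf.eq_iff, Prod.ext_iff, eq_comm (a := x)]
  exact hmax ⟨f₂⟩

theorem Copy.exists_compl_adj_of_not_isContained_succ (f : (nCopies k (pathGraph 2)).Copy G)
    (hmax : ¬ nCopies (k + 1) (pathGraph 2) ⊑ G) (i : Fin k) :
    ∃ t : Fin 2, ∃ d, ∀ x ∉ Set.range f, x ≠ d → Gᶜ.Adj (f (i, t)) x := by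
  have hne : ∀ t, ∀ x ∉ Set.range f, f (i, t) ≠ x := fun t x hx h => hx ⟨_, h⟩
  by_cases h : ∃ x₀ ∉ Set.range f, G.Adj (f (i, 0)) x₀
  · obtain ⟨x₀, hx₀, hadj⟩ := h
    exact ⟨1, x₀, fun x hx hxx₀ => ⟨hne 1 x hx,
      f.not_adj_of_not_isContained_succ hmax i hx₀ hx hxx₀.symm hadj⟩⟩
  · push Not at h
    exact ⟨0, f (i, 0), fun x hx _ => ⟨hne 0 x hx, h x hx⟩⟩

end MaximalMatching

section CyclePacking

variable [DecidableEq V] {R : SimpleGraph V} {S W : Finset V}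

open Finset

theorem exists_cycleGraph_five_copy_insert {h d : V} (hS : R.IsClique (S : Set V)) (hhS : h ∉ S)
    (hh : ∀ x ∈ S, x ≠ d → R.Adj h x) (hcard : 4 ≤ #S) :
    ∃ T ⊆ S, #T = 4 ∧ ∃ g : (cycleGraph 5).Copy R, ∀ j, g j ∈ insert h T := by
  -- `x₁` and `x₄` will be the neighbours of `h` on the cycle, so they must avoid `d`.
  obtain ⟨x₁, hx₁, x₄, hx₄, h₁₄⟩ := one_lt_card.1
    (show 1 < #(S.erase d) by have := pred_card_le_card_erase (s := S) (a := d); omega)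
  obtain ⟨x₂, hx₂, x₃, hx₃, h₂₃⟩ := one_lt_card.1
    (show 1 < #((S.erase x₁).erase x₄) by
      rw [card_erase_of_mem (mem_erase.2 ⟨h₁₄.symm, mem_of_mem_erase hx₄⟩),
        card_erase_of_mem (mem_of_mem_erase hx₁)]
      omega)
  simp only [mem_erase] at hx₁ hx₂ hx₃ hx₄
  have hxh : ∀ x ∈ S, x ≠ h := fun x hx hxh => hhS (hxh ▸ hx)
  have hx₁h := hxh x₁ hx₁.2
  have hx₂h := hxh x₂ hx₂.2.2
  have hx₃h := hxh x₃ hx₃.2.2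
  have hx₄h := hxh x₄ hx₄.2
  refine ⟨{x₁, x₂, x₃, x₄}, ?_, ?_, ?_⟩
  · simp [insert_subset_iff, *]
  · rw [card_eq_four]
    exact ⟨x₁, x₂, x₃, x₄, by simp_all [Ne.symm]⟩
  · have hinj : Function.Injective ![h, x₁, x₂, x₃, x₄] := by
      simp only [Matrix.vecCons, Fin.cons_injective_iff, Set.mem_range, Fin.exists_fin_succ,
        Fin.cons_zero, Fin.cons_succ]
      simp_all [Matrix.vecEmpty, Ne.symm, Function.injective_of_subsingleton]
    have hadj : ∀ j, R.Adj (![h, x₁, x₂, x₃, x₄] j) (![h, x₁, x₂, x₃, x₄] (j + 1)) := by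
      intro j
      fin_cases j <;> simp
      · exact hh x₁ hx₁.2 hx₁.1
      · exact hS hx₁.2 hx₂.2.2 hx₂.2.1.symm
      · exact hS hx₂.2.2 hx₃.2.2 h₂₃
      · exact hS hx₃.2.2 hx₄.2 hx₃.1
      · exact (hh x₄ hx₄.2 hx₄.1).symm
    obtain ⟨g, hg⟩ := exists_cycleGraph_copy _ hinj hadj
    refine ⟨g, fun j => ?_⟩
    rw [hg]
    fin_cases j <;> simp

-- The next cycle goes through a vertex of `W` while one is left, and lies inside `S` otherwise.
theorem exists_hub (hS : R.IsClique (S : Set V)) (hWS : Disjoint W S)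
    (hW : ∀ w ∈ W, ∃ d, ∀ x ∈ S, x ≠ d → R.Adj w x) {m : ℕ} (h4 : 4 * (m + 1) ≤ #S)
    (h5 : 5 * (m + 1) ≤ #S + #W) :
    ∃ h ∈ S ∪ W, (∃ d, ∀ x ∈ S.erase h, x ≠ d → R.Adj h x) ∧ 4 * (m + 1) ≤ #(S.erase h) ∧
      #S + #W = #(S.erase h) + #(W.erase h) + 1 := by
  rcases W.eq_empty_or_nonempty with rfl | ⟨w, hw⟩
  · obtain ⟨s, hs⟩ : S.Nonempty := card_pos.1 (by omega)
    refine ⟨s, mem_union_left _ hs, ⟨s, fun x hx _ => hS hs (mem_of_mem_erase hx)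
      (ne_of_mem_erase hx).symm⟩, ?_⟩
    simp only [card_erase_of_mem hs, erase_empty, Finset.card_empty] at h5 ⊢
    omega
  · have hwS : w ∉ S := Finset.disjoint_left.1 hWS hw
    obtain ⟨d, hd⟩ := hW w hw
    refine ⟨w, mem_union_right _ hw, ⟨d, fun x hx => hd x (mem_of_mem_erase hx)⟩, ?_⟩
    simp only [erase_eq_of_notMem hwS, card_erase_of_mem hw]
    have := card_pos.2 ⟨w, hw⟩
    omega

theorem exists_nCopies_cycleGraph_five_copy (m : ℕ) (hS : R.IsClique (S : Set V))
    (hWS : Disjoint W S) (hW : ∀ w ∈ W, ∃ d, ∀ x ∈ S, x ≠ d → R.Adj w x) (h4 : 4 * m ≤ #S)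
    (h5 : 5 * m ≤ #S + #W) :
    ∃ f : (nCopies m (cycleGraph 5)).Copy R, ∀ p, f p ∈ S ∪ W := by
  induction m generalizing S W with
  | zero => exact ⟨IsContained.of_isEmpty.some, fun p => p.1.elim0⟩
  | succ m ih =>
    obtain ⟨h, hh, ⟨d, hd⟩, h4', hsum⟩ := exists_hub hS hWS hW h4 h5
    obtain ⟨T, hT, hT4, g, hg⟩ := exists_cycleGraph_five_copy_insert
      (hS.subset (coe_subset.2 (erase_subset h S))) (notMem_erase h S) hd (by omega)
    have hTS : T ⊆ S := hT.trans (erase_subset h S)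
    obtain ⟨f, hf⟩ := ih (S := S.erase h \ T) (W := W.erase h)
      (hS.subset (coe_subset.2 (sdiff_subset.trans (erase_subset h S))))
      (disjoint_of_subset_left (erase_subset h W) (disjoint_of_subset_right
        (sdiff_subset.trans (erase_subset h S)) hWS))
      (fun w hw => (hW w (mem_of_mem_erase hw)).imp fun d hd x hx =>
        hd x (mem_of_mem_erase (mem_sdiff.1 hx).1))
      (by rw [card_sdiff_of_subset hT]; omega) (by rw [card_sdiff_of_subset hT]; omega)
    obtain ⟨f', hf'⟩ := g.exists_nCopies_succ f <| Set.disjoint_left.2 <| by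
      rintro _ ⟨j, rfl⟩ ⟨p, hp⟩
      have hgj := hg j
      have hfp := hf p
      rw [hp] at hfp
      simp only [mem_insert, mem_union, mem_sdiff, mem_erase] at hgj hfp
      rcases hgj with hj | hj
      · simp [hj] at hfp
      · rcases hfp with ⟨-, hjT⟩ | ⟨-, hjW⟩
        · exact hjT hj
        · exact Finset.disjoint_left.1 hWS hjW (hTS hj)
    refine ⟨f', fun p => ?_⟩
    rcases hf' ⟨p, rfl⟩ with ⟨j, hj⟩ | ⟨q, hq⟩
    · rcases mem_insert.1 (hj ▸ hg j) with hp | hp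
      · exact hp ▸ hh
      · exact mem_union_left _ (hTS hp)
    · have := hq ▸ hf q
      simp only [mem_union, mem_sdiff, mem_erase] at this ⊢
      tauto

theorem reachable_of_mem_union (hS : R.IsClique (S : Set V))
    (hW : ∀ w ∈ W, ∃ d, ∀ x ∈ S, x ≠ d → R.Adj w x) (hS2 : 1 < #S) {u v : V}
    (hu : u ∈ S ∪ W) (hv : v ∈ S ∪ W) : R.Reachable u v := by
  have hreach : ∀ u ∈ S ∪ W, ∃ x ∈ S, R.Reachable u x := by
    intro u hu
    rcases mem_union.1 hu with hu | hu
    · exact ⟨u, hu, .rfl⟩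
    · obtain ⟨d, hd⟩ := hW u hu
      obtain ⟨x, hx, hxd⟩ := exists_mem_ne hS2 d
      exact ⟨x, hx, (hd x hx hxd).reachable⟩
  obtain ⟨x, hx, hux⟩ := hreach u hu
  obtain ⟨y, hy, hvy⟩ := hreach v hv
  have hxy : R.Reachable x y := by
    by_cases h : x = y
    · exact h ▸ .rfl
    · exact (hS hx hy h).reachable
  exact hux.trans (hxy.trans hvy.symm)

end CyclePacking

open Finset in
theorem nCopies_pathGraph_two_isContained_or_exists_connected_copy [Fintype V]
    (G : SimpleGraph V) {m n : ℕ} (hnm : n ≤ m) (hV : 5 * m + n ≤ Fintype.card V + 1) :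
    nCopies n (pathGraph 2) ⊑ G ∨
      ∃ f : (nCopies m (cycleGraph 5)).Copy Gᶜ, ∀ u v, Gᶜ.Reachable (f u) (f v) := by
  classical
  refine or_iff_not_imp_left.2 fun hn => ?_
  obtain ⟨k, hkn, ⟨f⟩, hmax⟩ := exists_maximal_nCopies_isContained hn
  have hf : Function.Injective f := f.injective
  choose t d hd using f.exists_compl_adj_of_not_isContained_succ hmax
  set S := (univ.image f)ᶜ
  set W := univ.image fun i => f (i, t i)
  have hSf : (S : Set V) = (Set.range f)ᶜ := by simp [S]
  have hSk : #S = Fintype.card V - 2 * k := by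
    rw [card_compl, card_image_of_injective _ hf]
    simp [mul_comm]
  have hWk : #W = k := by
    rw [card_image_of_injective, card_univ, Fintype.card_fin]
    exact hf.comp fun i j h => congrArg Prod.fst h
  have hWS : Disjoint W S :=
    disjoint_compl_right.mono_left (image_subset_iff.2 fun i _ => mem_image_of_mem f (mem_univ _))
  have hclique : Gᶜ.IsClique (S : Set V) := hSf ▸ f.isClique_compl_range_compl hmax
  have hhub : ∀ w ∈ W, ∃ d, ∀ x ∈ S, x ≠ d → Gᶜ.Adj w x := by
    simp only [W, mem_image, mem_univ, true_and, forall_exists_index, forall_apply_eq_imp_iff]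
    exact fun i => ⟨d i, fun x hx => hd i x (by rwa [← Set.mem_compl_iff, ← hSf, mem_coe])⟩
  obtain ⟨g, hg⟩ := exists_nCopies_cycleGraph_five_copy m hclique hWS hhub (by omega) (by omega)
  exact ⟨g, fun u v => reachable_of_mem_union hclique hhub (by omega) (hg u) (hg v)⟩

section VertexCover

open Finset

variable {G : SimpleGraph V}

theorem le_card_of_nCopies_pathGraph_two_isContained {A : Finset V}
    (hA : ∀ x y, G.Adj x y → x ∈ A ∨ y ∈ A) {n : ℕ} (h : nCopies n (pathGraph 2) ⊑ G) :
    n ≤ #A := by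
  obtain ⟨f⟩ := h
  have hf : Function.Injective f := f.injective
  have hcover : ∀ i, ∃ t, f (i, t) ∈ A := fun i =>
    (hA _ _ (f.toHom.map_adj (show (nCopies n (pathGraph 2)).Adj (i, 0) (i, 1) from
      ⟨rfl, by simp [pathGraph_adj]⟩))).elim (⟨0, ·⟩) (⟨1, ·⟩)
  choose t ht using hcover
  simpa using card_le_card_of_injOn (s := univ) (fun i => f (i, t i)) (fun i _ => ht i)
    (hf.comp fun i j h => congrArg Prod.fst h).injOn

theorem card_le_of_isContained {H : SimpleGraph U} [Fintype U] {A : Finset V}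
    (hA : ∀ x y, G.Adj x y → x ∈ A) (hH : ∀ a, ∃ b, H.Adj a b) (h : H ⊑ G) :
    Fintype.card U ≤ #A := by
  obtain ⟨f⟩ := h
  simpa using card_le_card_of_injOn (s := univ) f
    (fun a _ => hA _ _ (f.toHom.map_adj (hH a).choose_spec)) (f.injective.injOn)

theorem exists_nCopies_pathGraph_two_free_and_compl_free [Fintype V] {m n : ℕ} (hn : 1 ≤ n)
    (hm : 1 ≤ m) (hV : Fintype.card V + 2 ≤ 5 * m + n) :
    ∃ G : SimpleGraph V, ¬ nCopies n (pathGraph 2) ⊑ G ∧ ¬ nCopies m (cycleGraph 5) ⊑ Gᶜ := by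
  classical
  obtain ⟨A, -, hA⟩ :=
    exists_subset_card_eq (s := (univ : Finset V)) (n := min (Fintype.card V) (n - 1)) (by simp)
  refine ⟨fromRel fun x _ => x ∈ A, fun h => ?_, fun h => ?_⟩
  · have := le_card_of_nCopies_pathGraph_two_isContained
      (fun x y hxy => ((fromRel_adj _ x y).1 hxy).2) h
    omega
  · have := card_le_of_isContained (A := Aᶜ) (fun x y hxy => by
      simp_all [compl_adj, fromRel_adj]) (fun p => ⟨(p.1, p.2 + 1),
        show (nCopies m (cycleGraph 5)).Adj _ _ from ⟨rfl, by simp [cycleGraph_adj]⟩⟩) h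
    simp only [card_compl, Fintype.card_prod, Fintype.card_fin] at this
    omega

end VertexCover

end SimpleGraph

section Colorings

variable {V : Type*} {N : ℕ} {α : Type*} {c : Sym2 (Fin N) → α} {i : α}

theorem colorGraph_adj {x y : Fin N} : (colorGraph c i).Adj x y ↔ c s(x, y) = i ∧ x ≠ y := by
  simp [colorGraph]

theorem hasCopyInColor_iff {H : SimpleGraph V} : hasCopyInColor H c i ↔ H ⊑ colorGraph c i := by
  constructor
  · rintro ⟨f, hf⟩
    exact ⟨⟨⟨f, fun huv => colorGraph_adj.2 ⟨hf _ _ huv, f.injective.ne huv.ne⟩⟩, f.injective⟩⟩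
  · rintro ⟨f⟩
    exact ⟨f.toEmbedding, fun u v huv => (colorGraph_adj.1 (f.toHom.map_adj huv)).1⟩

theorem hasConnCopyInColor_iff {H : SimpleGraph V} :
    hasConnCopyInColor H c i ↔
      ∃ f : H.Copy (colorGraph c i), ∀ u v, (colorGraph c i).Reachable (f u) (f v) := by
  constructor
  · rintro ⟨f, hf, hreach⟩
    exact ⟨⟨⟨f, fun huv => colorGraph_adj.2 ⟨hf _ _ huv, f.injective.ne huv.ne⟩⟩, f.injective⟩,
      hreach⟩
  · rintro ⟨f, hreach⟩
    exact ⟨f.toEmbedding, fun u v huv => (colorGraph_adj.1 (f.toHom.map_adj huv)).1, hreach⟩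

theorem colorGraph_zero_eq_compl (c : Sym2 (Fin N) → Fin 2) :
    colorGraph c 0 = (colorGraph c 1)ᶜ := by
  ext x y
  simp only [colorGraph_adj, SimpleGraph.compl_adj]
  generalize c s(x, y) = a
  fin_cases a <;> simp [and_comm]

theorem exists_colorGraph_one_eq (G : SimpleGraph (Fin N)) :
    ∃ c : Sym2 (Fin N) → Fin 2, colorGraph c 1 = G := by
  classical
  refine ⟨fun e => if e ∈ G.edgeSet then 1 else 0, ?_⟩
  ext x y
  simp only [colorGraph_adj, SimpleGraph.mem_edgeSet]
  split_ifs with h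
  · simp [h, h.ne]
  · simp [h]

theorem hasConnCopyInColor_cycles_or_hasCopyInColor_matching (c : Sym2 (Fin N) → Fin 2)
    {m n : ℕ} (hnm : n ≤ m) (hN : 5 * m + n ≤ N + 1) :
    hasConnCopyInColor (nCopies m (cycleGraph 5)) c 0 ∨
      hasCopyInColor (nCopies n (pathGraph 2)) c 1 := by
  rw [hasConnCopyInColor_iff, hasCopyInColor_iff, colorGraph_zero_eq_compl]
  exact (SimpleGraph.nCopies_pathGraph_two_isContained_or_exists_connected_copy (colorGraph c 1)
    hnm (by simpa using hN)).symm

theorem exists_coloring_not_hasConnCopyInColor_cycles_and_not_hasCopyInColor_matching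
    {m n : ℕ} (hn : 1 ≤ n) (hm : 1 ≤ m) (hN : N + 2 ≤ 5 * m + n) :
    ∃ c : Sym2 (Fin N) → Fin 2, ¬ hasConnCopyInColor (nCopies m (cycleGraph 5)) c 0 ∧
      ¬ hasCopyInColor (nCopies n (pathGraph 2)) c 1 := by
  obtain ⟨G, hG₁, hG₂⟩ :=
    SimpleGraph.exists_nCopies_pathGraph_two_free_and_compl_free (V := Fin N) hn hm (by simpa)
  obtain ⟨c, rfl⟩ := exists_colorGraph_one_eq G
  refine ⟨c, ?_⟩
  rw [hasConnCopyInColor_iff, hasCopyInColor_iff, colorGraph_zero_eq_compl]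
  exact ⟨fun ⟨f, _⟩ => hG₂ ⟨f⟩, hG₁⟩

end Colorings

/-- `R(𝒞(mC₅), nK₂) = 5m + n − 1` for `m ≥ n ≥ 1`. -/
theorem stmt7 (m n : ℕ) (hn : 1 ≤ n) (hmn : n ≤ m) :
    ramseyConnPair (nCopies m (SimpleGraph.cycleGraph 5))
      (nCopies n (SimpleGraph.pathGraph 2)) = 5 * m + n - 1 := by
  have hmem : ∀ c : Sym2 (Fin (5 * m + n - 1)) → Fin 2,
      hasConnCopyInColor (nCopies m (cycleGraph 5)) c 0 ∨
        hasCopyInColor (nCopies n (pathGraph 2)) c 1 :=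
    fun c => hasConnCopyInColor_cycles_or_hasCopyInColor_matching c hmn (by omega)
  refine le_antisymm (Nat.sInf_le hmem) (le_csInf ⟨_, hmem⟩ fun N hN => ?_)
  by_contra! hlt
  obtain ⟨c, hred, hblue⟩ :=
    exists_coloring_not_hasConnCopyInColor_cycles_and_not_hasCopyInColor_matching
      hn (hn.trans hmn) (by omega : N + 2 ≤ 5 * m + n)
  exact (hN c).elim hred hblue
end

section
/- For every m ≥ 2, R_3(mC_5) ≥ 11m − 2: there is a 3-coloring of the edges of K_{11m-3} with no monochromatic copy of m disjoint 5-cycles. -/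
open SimpleGraph

/-!
Split the vertices of `K_{11m-3}` into blocks of sizes `5m-1`, `5m-1`, `m-1`; edges inside the
first two blocks get colors `0` and `1`, all other edges color `2`. A copy of `mC₅` in color `0`
or `1` would need `5m` vertices in a block of size `5m-1`. In color `2` the edges between the
first two blocks form a bipartite graph, so each of the `m` disjoint odd cycles needs its own
vertex in the third block, which only has `m-1`. For the bound on `R₃` one also needs the
Ramsey number to be finite: the multicolor Ramsey theorem, by induction on the clique sizes.
-/

open Finset Function

theorem exists_monochromatic_subset {α : Type*} [Fintype α] (s : α → ℕ) :
    ∃ N, ∀ (V : Type*) (c : Sym2 V → α) (X : Finset V), N ≤ #X →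
      ∃ i, ∃ S ⊆ X, s i ≤ #S ∧ (S : Set V).Pairwise fun u v => c s(u, v) = i := by
  classical
  induction s using WellFoundedLT.induction with
  | _ s ih =>
  by_cases hzero : ∃ i, s i = 0
  · obtain ⟨i, hi⟩ := hzero
    exact ⟨0, fun V c X _ => ⟨i, ∅, empty_subset _, by simp [hi], by simp⟩⟩
  push Not at hzero
  choose N hN using fun i =>
    ih (update s i (s i - 1)) (update_lt_self_iff.2 (Nat.sub_one_lt (hzero i)))
  refine ⟨Fintype.card α * ∑ i, N i + 1, fun V c X hX => ?_⟩
  obtain ⟨v, hv⟩ : X.Nonempty := card_pos.1 (by omega)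
  have : Nonempty α := ⟨c s(v, v)⟩
  obtain ⟨i, -, hi⟩ := exists_le_card_fiber_of_mul_le_card_of_maps_to
    (s := X.erase v) (f := fun u => c s(v, u)) (n := ∑ i, N i)
    (fun _ _ => mem_univ _) univ_nonempty (by rw [card_erase_of_mem hv, card_univ]; omega)
  obtain ⟨j, S, hSX, hSj, hS⟩ :=
    hN i V c _ ((single_le_sum (fun _ _ => Nat.zero_le _) (mem_univ i)).trans hi)
  have hSX' : S ⊆ X.erase v := hSX.trans (filter_subset _ _)
  by_cases hji : j = i
  · subst hji
    have hvS : v ∉ S := fun h => (mem_erase.1 (hSX' h)).1 rfl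
    refine ⟨j, insert v S, insert_subset hv (hSX'.trans (erase_subset _ _)), ?_, ?_⟩
    · rw [card_insert_of_notMem hvS]
      rw [update_self] at hSj
      omega
    · rw [coe_insert]
      refine Set.pairwise_insert.2 ⟨hS, fun u hu _ => ?_⟩
      have hvu : c s(v, u) = j := (mem_filter.1 (hSX hu)).2
      exact ⟨hvu, Sym2.eq_swap ▸ hvu⟩
  · exact ⟨j, S, hSX'.trans (erase_subset _ _), by rwa [update_of_ne hji] at hSj, hS⟩

theorem hasCopyInColor_of_pairwise {W α : Type*} [Fintype W] (H : SimpleGraph W) {n : ℕ}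
    {c : Sym2 (Fin n) → α} {i : α} {S : Finset (Fin n)} (hS : Fintype.card W ≤ #S)
    (hc : (S : Set (Fin n)).Pairwise fun u v => c s(u, v) = i) : hasCopyInColor H c i := by
  obtain ⟨f⟩ := Embedding.nonempty_of_card_le (hS.trans (Fintype.card_coe S).ge)
  exact ⟨f.trans (Embedding.subtype _), fun u v huv =>
    hc (f u).2 (f v).2 (by simpa using huv.ne)⟩

theorem hasMonoCopy_of_comp_embedding {W α : Type*} {H : SimpleGraph W} {n n' : ℕ}
    {c : Sym2 (Fin n) → α} (e : Fin n' ↪ Fin n) (h : hasMonoCopy H (c ∘ Sym2.map e)) :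
    hasMonoCopy H c := by
  obtain ⟨i, f, hf⟩ := h
  exact ⟨i, f.trans e, fun u v huv => by simpa using hf u v huv⟩

theorem exists_forall_hasMonoCopy {W : Type*} [Fintype W] (H : SimpleGraph W) (k : ℕ) :
    ∃ N, ∀ c : Sym2 (Fin N) → Fin k, hasMonoCopy H c := by
  obtain ⟨N, hN⟩ := exists_monochromatic_subset fun _ : Fin k => Fintype.card W
  refine ⟨N, fun c => ?_⟩
  obtain ⟨i, S, -, hS, hc⟩ := hN (Fin N) c univ (by simp)
  exact ⟨i, hasCopyInColor_of_pairwise H hS hc⟩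

theorem lt_ramsey_of_not_hasMonoCopy {W : Type*} [Fintype W] {H : SimpleGraph W} {k n : ℕ}
    {c : Sym2 (Fin n) → Fin k} (hc : ¬ hasMonoCopy H c) : n < ramsey H k := by
  obtain ⟨N, hN⟩ := exists_forall_hasMonoCopy H k
  unfold ramsey
  refine Nat.lt_of_succ_le (le_csInf ⟨N, hN⟩ fun n' hn' => ?_)
  by_contra! hle
  exact hc (hasMonoCopy_of_comp_embedding (Fin.castLEEmb (Nat.le_of_lt_succ hle)) (hn' _))

section PartColoring

variable {V α : Type*} [DecidableEq α]

def partColoring (p : V → α) (d : α) : Sym2 V → α :=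
  Sym2.lift ⟨fun x y => if p x = p y then p x else d, fun x y => by grind⟩

@[simp]
theorem partColoring_mk (p : V → α) (d : α) (x y : V) :
    partColoring p d s(x, y) = if p x = p y then p x else d := rfl

variable {W : Type*} {H : SimpleGraph W} {p : V → α} {d : α} {g : W → V}

theorem part_eq_of_partColoring_copy (hH : ∀ w, ∃ w', H.Adj w w') {i : α}
    (hg : ∀ u v, H.Adj u v → partColoring p d s(g u, g v) = i) (hi : i ≠ d) (w : W) :
    p (g w) = i := by
  obtain ⟨w', hw⟩ := hH w
  have := hg w w' hw
  grind [partColoring_mk]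

theorem exists_part_eq_of_partColoring_copy [Fintype α]
    (hH : ¬ H.Colorable (Fintype.card α - 1))
    (hg : ∀ u v, H.Adj u v → partColoring p d s(g u, g v) = d) : ∃ w, p (g w) = d := by
  by_contra! h
  let C : H.Coloring {j // j ≠ d} := Coloring.mk (fun w => ⟨p (g w), h w⟩) fun {u v} huv => by
    have := hg u v huv
    grind [partColoring_mk]
  exact hH (by simpa using C.colorable)

end PartColoring

theorem card_le_of_forall_mem_Ico {W : Type*} [Fintype W] {N a b : ℕ} {f : W → Fin N}
    (hf : Injective f) (h : ∀ w, a ≤ f w ∧ (f w : ℕ) < b) : Fintype.card W ≤ b - a := by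
  simpa using card_le_card_of_injOn (s := univ) (t := Ico a b) (fun w => (f w : ℕ))
    (fun w _ => by simpa using h w) (fun u _ v _ huv => hf (Fin.ext huv))

def blockPart (a : ℕ) {N : ℕ} (x : Fin N) : Fin 3 :=
  if (x : ℕ) < a then 0 else if (x : ℕ) < 2 * a then 1 else 2

theorem blockPart_mem_Ico {a N : ℕ} {x : Fin N} {i : Fin 3} (h : blockPart a x = i)
    (hi : i ≠ 2) : i * a ≤ (x : ℕ) ∧ (x : ℕ) < i * a + a := by
  unfold blockPart at h
  split_ifs at h <;> subst h <;> simp_all; omega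

theorem two_mul_le_of_blockPart_eq_two {a N : ℕ} {x : Fin N} (h : blockPart a x = 2) :
    2 * a ≤ (x : ℕ) := by
  unfold blockPart at h
  split_ifs at h <;> omega

theorem not_hasMonoCopy_nCopies_partColoring_blockPart {W : Type*} [Fintype W]
    {G : SimpleGraph W} (hG : ∀ w, ∃ w', G.Adj w w') (hG2 : ¬ G.Colorable 2) {m a N : ℕ}
    (ha : a < m * Fintype.card W) (hN : N < 2 * a + m) :
    ¬ hasMonoCopy (nCopies m G) (partColoring (blockPart a (N := N)) 2) := by
  rintro ⟨i, f, hf⟩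
  by_cases hi : i = 2
  · subst hi
    choose w hw using fun k : Fin m =>
      exists_part_eq_of_partColoring_copy (by simpa using hG2)
        fun u v huv => hf (k, u) (k, v) ⟨rfl, huv⟩
    have := card_le_of_forall_mem_Ico (f := fun k => f (k, w k)) (a := 2 * a) (b := N)
      (fun k k' hk => congrArg Prod.fst (f.injective hk))
      fun k => ⟨two_mul_le_of_blockPart_eq_two (hw k), (f (k, w k)).2⟩
    have hm : m ≠ 0 := by rintro rfl; simp at ha
    simp only [Fintype.card_fin] at this
    omega
  · have hpart := part_eq_of_partColoring_copy (H := nCopies m G)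
      (fun ⟨k, w⟩ => let ⟨w', h⟩ := hG w; ⟨(k, w'), rfl, h⟩) hf hi
    have := card_le_of_forall_mem_Ico f.injective fun v => blockPart_mem_Ico (hpart v) hi
    simp only [Fintype.card_prod, Fintype.card_fin, Nat.add_sub_cancel_left] at this
    omega

theorem cycleGraph_five_not_colorable_two : ¬ (cycleGraph 5).Colorable 2 := fun h => by
  have := h.chromaticNumber_le
  rw [chromaticNumber_cycleGraph_of_odd 5 (by norm_num) (by decide)] at this
  norm_num at this

/-- `R₃(mC₅) ≥ 11m − 2` for `m ≥ 2`: there is a 3-coloring of `K_{11m−3}` with no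
monochromatic `mC₅`. -/
theorem stmt9 (m : ℕ) (hm : 2 ≤ m) :
    11 * m - 2 ≤ ramsey (nCopies m (SimpleGraph.cycleGraph 5)) 3 ∧
    ∃ c : Sym2 (Fin (11 * m - 3)) → Fin 3,
      ¬ hasMonoCopy (nCopies m (SimpleGraph.cycleGraph 5)) c := by
  have hc : ¬ hasMonoCopy (nCopies m (cycleGraph 5))
      (partColoring (blockPart (5 * m - 1) (N := 11 * m - 3)) 2) :=
    not_hasMonoCopy_nCopies_partColoring_blockPart (by decide)
      cycleGraph_five_not_colorable_two (by rw [Fintype.card_fin]; omega) (by omega)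
  exact ⟨by have := lt_ramsey_of_not_hasMonoCopy hc; omega, _, hc⟩
end
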